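/- arXiv:2605.20572 — 2 statements merged into one kernel-verified Lean document; each statement's English description precedes it below -/
import Mathlib

section
/- Let p be a sampling design with π_i > 0 and let r_i > 0 for all i. Set D_π = Σ_{i=1}^N r_i²(1−π_i)/π_i, and let ε be uniform on {−1,1}^N independent of S. If δ is an unbiased estimator whose Bayes risk under the uniform prior on the vertices of Θ equals D_π, then for every sample s with p(s) > 0 and every sign vector ε, δ_s((m_i + r_i ε_i)_{i∈s}) = Σ_{i=1}^N m_i + Σ_{i∈s} r_i ε_i / π_i; that is, δ coincides with the midpoint-differenced Horvitz–Thompson estimator at every vertex of Θ. -/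
private def sg (b : Bool) : ℝ := if b then 1 else -1

private lemma sg_not (b : Bool) : sg (!b) = - sg b := by cases b <;> simp [sg]

private lemma sg_mul_self (b : Bool) : sg b * sg b = 1 := by cases b <;> simp [sg]

private lemma flip_sum {N : ℕ} (i : Fin N) (F : (Fin N → Bool) → ℝ)
    (h : ∀ ε, F (fun j => if j = i then !ε j else ε j) = - F ε) :
    ∑ ε : Fin N → Bool, F ε = 0 := by
  have hb : Function.Bijective
      (fun ε : Fin N → Bool => fun j => if j = i then !ε j else ε j) := by
    apply Function.Involutive.bijective
    intro ε; funext j; by_cases hj : j = i <;> simp [hj]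
  have h2 : ∑ ε : Fin N → Bool, F (fun j => if j = i then !ε j else ε j)
      = ∑ ε : Fin N → Bool, F ε :=
    Fintype.sum_bijective _ hb _ _ (fun ε => rfl)
  have h3 : ∑ ε : Fin N → Bool, F (fun j => if j = i then !ε j else ε j)
      = - ∑ ε : Fin N → Bool, F ε := by
    simp_rw [h]; rw [Finset.sum_neg_distrib]
  linarith

private lemma sg_orth {N : ℕ} {i j : Fin N} (hij : i ≠ j) :
    ∑ ε : Fin N → Bool, sg (ε i) * sg (ε j) = 0 := by
  apply flip_sum i
  intro ε
  simp only [if_pos rfl, if_neg (Ne.symm hij), sg_not, if_true, eq_self_iff_true]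
  ring

private lemma card_eps {N : ℕ} : ∑ _ε : Fin N → Bool, (1:ℝ) = 2 ^ N := by
  simp [Finset.card_univ]

private lemma sum_sq_sgn {N : ℕ} (w : Fin N → ℝ) :
    ∑ ε : Fin N → Bool, (∑ i, w i * sg (ε i)) ^ 2 = 2 ^ N * ∑ i, w i ^ 2 := by
  have hexp : ∀ ε : Fin N → Bool, (∑ i, w i * sg (ε i)) ^ 2
      = ∑ i, ∑ j, (w i * w j) * (sg (ε i) * sg (ε j)) := by
    intro ε
    rw [sq, Finset.sum_mul_sum]
    exact Finset.sum_congr rfl fun i _ => Finset.sum_congr rfl fun j _ => by ring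
  simp_rw [hexp]
  rw [Finset.sum_comm]
  have : ∀ i : Fin N, ∑ ε : Fin N → Bool, ∑ j, (w i * w j) * (sg (ε i) * sg (ε j))
      = 2 ^ N * w i ^ 2 := by
    intro i
    rw [Finset.sum_comm]
    have : ∀ j : Fin N, ∑ ε : Fin N → Bool, (w i * w j) * (sg (ε i) * sg (ε j))
        = if j = i then 2 ^ N * w i ^ 2 else 0 := by
      intro j
      rw [← Finset.mul_sum]
      by_cases hj : j = i
      · subst hj
        simp_rw [sg_mul_self]
        rw [card_eps]; simp; ring
      · rw [sg_orth (Ne.symm hj), if_neg hj, mul_zero]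
    simp_rw [this]
    simp
  simp_rw [this]
  rw [← Finset.mul_sum]

/-- An unbiased estimator whose vertex Bayes risk equals the
bound coincides with the midpoint-differenced Horvitz–Thompson estimator at the
vertices. Let `Dπ = ∑ i, r i ^ 2 * (1 − π i)/π i`. If the Bayes risk of an
unbiased estimator `δ` under the uniform prior on the vertices of `Θ` equals
`Dπ`, then for every sample `s` with `p s > 0` and every sign vector `ε`
(encoded by `Fin N → Bool`, `true ↦ 1`, `false ↦ -1`),
`δ_s((m i + r i ε i)_{i∈s}) = ∑ i, m i + ∑_{i∈s} r i ε i / π i`. -/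
theorem bayes_equality_forces_HT_on_vertices
    (N : ℕ) (a b : Fin N → ℝ) (hab : ∀ i, a i < b i)
    (m r : Fin N → ℝ)
    (hm : ∀ i, m i = (a i + b i) / 2)
    (hr : ∀ i, r i = (b i - a i) / 2) (hrpos : ∀ i, 0 < r i)
    (p : Finset (Fin N) → ℝ) (hp0 : ∀ s, 0 ≤ p s)
    (hp1 : ∑ s : Finset (Fin N), p s = 1)
    (π : Fin N → ℝ)
    (hπ : ∀ i, π i = ∑ s : Finset (Fin N), if i ∈ s then p s else 0)
    (hπpos : ∀ i, 0 < π i)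
    (δ : Finset (Fin N) → (Fin N → ℝ) → ℝ)
    (hloc : ∀ s (y y' : Fin N → ℝ), (∀ i ∈ s, y i = y' i) → δ s y = δ s y')
    (hunb : ∀ y : Fin N → ℝ, (∀ i, y i ∈ Set.Icc (a i) (b i)) →
      ∑ s : Finset (Fin N), p s * δ s y = ∑ i, y i)
    (hbayes : ((2 : ℝ) ^ N)⁻¹ *
        ∑ ε : Fin N → Bool, ∑ s : Finset (Fin N),
          p s * (δ s (fun i => m i + r i * (if ε i then 1 else -1))
            - ∑ i, (m i + r i * (if ε i then 1 else -1))) ^ 2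
      = ∑ i, r i ^ 2 * ((1 - π i) / π i)) :
    ∀ s : Finset (Fin N), 0 < p s → ∀ ε : Fin N → Bool,
      δ s (fun i => m i + r i * (if ε i then 1 else -1))
        = (∑ i, m i) + ∑ i ∈ s, r i * (if ε i then 1 else -1) / π i := by
  classical
  have hsg : ∀ bb : Bool, (if bb then (1:ℝ) else -1) = sg bb := fun bb => rfl
  simp only [hsg] at hbayes ⊢
  intro s hs ε
  set H : Finset (Fin N) → (Fin N → Bool) → ℝ :=
    fun u e => δ u (fun i => m i + r i * sg (e i))
      - ((∑ i, m i) + ∑ i ∈ u, r i * sg (e i) / π i) with hHdef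
  set U : Finset (Fin N) → (Fin N → Bool) → ℝ :=
    fun u e => (∑ i ∈ u, r i * sg (e i) / π i) - ∑ i, r i * sg (e i) with hUdef
  set c : Finset (Fin N) → Fin N → ℝ :=
    fun u i => (if i ∈ u then (π i)⁻¹ else 0) - 1 with hcdef
  -- swap lemma
  have swap : ∀ t : Fin N → ℝ,
      ∑ u : Finset (Fin N), p u * ∑ i ∈ u, t i = ∑ i, π i * t i := by
    intro t
    have h1 : ∀ u : Finset (Fin N), p u * ∑ i ∈ u, t i
        = ∑ i : Fin N, (if i ∈ u then p u * t i else 0) := by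
      intro u
      rw [Finset.sum_ite_mem, Finset.univ_inter, Finset.mul_sum]
    simp_rw [h1]
    rw [Finset.sum_comm]
    refine Finset.sum_congr rfl fun i _ => ?_
    rw [hπ i, Finset.sum_mul]
    refine Finset.sum_congr rfl fun u _ => ?_
    by_cases h : i ∈ u <;> simp [h]
  -- Bernoulli lemma
  have bern : ∀ (i : Fin N) (X Z : ℝ),
      ∑ u : Finset (Fin N), p u * (if i ∈ u then X else Z)
        = π i * X + (1 - π i) * Z := by
    intro i X Z
    have h1 : ∀ u : Finset (Fin N), p u * (if i ∈ u then X else Z)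
        = (if i ∈ u then p u else 0) * (X - Z) + p u * Z := by
      intro u; by_cases h : i ∈ u <;> simp [h] <;> ring
    simp_rw [h1]
    rw [Finset.sum_add_distrib, ← Finset.sum_mul, ← Finset.sum_mul, ← hπ i, hp1]
    ring
  -- vertices lie in Θ
  have hYmem : ∀ e : Fin N → Bool, ∀ i,
      (m i + r i * sg (e i)) ∈ Set.Icc (a i) (b i) := by
    intro e i
    have hb' : m i + r i = b i := by rw [hm, hr]; ring
    have ha' : m i - r i = a i := by rw [hm, hr]; ring
    have h1 := hab i
    have h2 := hrpos i
    rw [Set.mem_Icc]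
    cases h : e i
    · have hv : sg false = -1 := by simp [sg]
      rw [hv]; constructor <;> nlinarith
    · have hv : sg true = 1 := by simp [sg]
      rw [hv]; constructor <;> nlinarith
  -- unbiasedness in H form
  have hmean : ∀ e : Fin N → Bool, ∑ u : Finset (Fin N), p u * H u e = 0 := by
    intro e
    have h1 := hunb (fun i => m i + r i * sg (e i)) (fun i => hYmem e i)
    have h2 : ∑ u : Finset (Fin N), p u * ((∑ i, m i) + ∑ i ∈ u, r i * sg (e i) / π i)
        = ∑ i, (m i + r i * sg (e i)) := by
      have h3 : ∀ u : Finset (Fin N),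
          p u * ((∑ i, m i) + ∑ i ∈ u, r i * sg (e i) / π i)
          = p u * (∑ i, m i) + p u * ∑ i ∈ u, r i * sg (e i) / π i :=
        fun u => by ring
      simp_rw [h3]
      rw [Finset.sum_add_distrib, ← Finset.sum_mul, hp1, one_mul,
        swap (fun i => r i * sg (e i) / π i), Finset.sum_add_distrib]
      congr 1
      refine Finset.sum_congr rfl fun i _ => ?_
      have hne : π i ≠ 0 := (hπpos i).ne'
      field_simp
    have h4 : ∀ u : Finset (Fin N), p u * H u e
        = p u * δ u (fun i => m i + r i * sg (e i))
          - p u * ((∑ i, m i) + ∑ i ∈ u, r i * sg (e i) / π i) := by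
      intro u; simp only [hHdef]; ring
    simp_rw [h4]
    rw [Finset.sum_sub_distrib, h1, h2, sub_self]
  -- coefficient vanishing for i outside the sample
  have hA0 : ∀ u : Finset (Fin N), ∀ i, i ∉ u →
      ∑ e : Fin N → Bool, H u e * sg (e i) = 0 := by
    intro u i hi
    apply flip_sum i
    intro e
    have hδ : δ u (fun j => m j + r j * sg (if j = i then !e j else e j))
        = δ u (fun j => m j + r j * sg (e j)) := by
      apply hloc
      intro j hj
      have hne : j ≠ i := fun h => hi (h ▸ hj)
      simp [hne]
    have hsum : ∑ j ∈ u, r j * sg (if j = i then !e j else e j) / π j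
        = ∑ j ∈ u, r j * sg (e j) / π j := by
      refine Finset.sum_congr rfl fun j hj => ?_
      have hne : j ≠ i := fun h => hi (h ▸ hj)
      simp [hne]
    simp only [hHdef]
    rw [hδ, hsum]
    simp only [if_true, ite_true, eq_self_iff_true, sg_not]
    ring
  -- averaged coefficient vanishing
  have hAsum : ∀ i : Fin N,
      ∑ u : Finset (Fin N), p u * ∑ e : Fin N → Bool, H u e * sg (e i) = 0 := by
    intro i
    have h1 : ∀ u : Finset (Fin N), p u * ∑ e : Fin N → Bool, H u e * sg (e i)
        = ∑ e : Fin N → Bool, p u * H u e * sg (e i) := by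
      intro u; rw [Finset.mul_sum]
      exact Finset.sum_congr rfl fun e _ => by ring
    simp_rw [h1]
    rw [Finset.sum_comm]
    refine Finset.sum_eq_zero fun e _ => ?_
    rw [← Finset.sum_mul, hmean e, zero_mul]
  -- U as a signed linear combination
  have hUc : ∀ u e, U u e = ∑ i, (r i * c u i) * sg (e i) := by
    intro u e
    simp only [hUdef, hcdef]
    have h1 : ∀ i : Fin N, (r i * ((if i ∈ u then (π i)⁻¹ else 0) - 1)) * sg (e i)
        = (if i ∈ u then r i * sg (e i) / π i else 0) - r i * sg (e i) := by
      intro i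
      by_cases h : i ∈ u
      · rw [if_pos h, if_pos h, div_eq_mul_inv]; ring
      · rw [if_neg h, if_neg h]; ring
    simp_rw [h1]
    rw [Finset.sum_sub_distrib, Finset.sum_ite_mem, Finset.univ_inter]
  -- cross term vanishes
  have hcross : ∑ e : Fin N → Bool, ∑ u : Finset (Fin N),
      p u * (H u e * U u e) = 0 := by
    have h1 : ∀ u : Finset (Fin N), ∑ e : Fin N → Bool, p u * (H u e * U u e)
        = ∑ i : Fin N, (r i * c u i) * (p u * ∑ e : Fin N → Bool, H u e * sg (e i)) := by
      intro u
      have h2 : ∀ e : Fin N → Bool, p u * (H u e * U u e)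
          = ∑ i : Fin N, (r i * c u i) * (p u * (H u e * sg (e i))) := by
        intro e
        rw [hUc u e, Finset.mul_sum, Finset.mul_sum]
        exact Finset.sum_congr rfl fun i _ => by ring
      simp_rw [h2]
      rw [Finset.sum_comm]
      refine Finset.sum_congr rfl fun i _ => ?_
      rw [Finset.mul_sum, Finset.mul_sum]
    rw [Finset.sum_comm]
    calc ∑ u : Finset (Fin N), ∑ e : Fin N → Bool, p u * (H u e * U u e)
        = ∑ u : Finset (Fin N), ∑ i : Fin N,
            (r i * c u i) * (p u * ∑ e : Fin N → Bool, H u e * sg (e i)) :=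
          Finset.sum_congr rfl fun u _ => h1 u
      _ = ∑ i : Fin N, ∑ u : Finset (Fin N),
            (r i * c u i) * (p u * ∑ e : Fin N → Bool, H u e * sg (e i)) :=
          Finset.sum_comm
      _ = 0 := by
          refine Finset.sum_eq_zero fun i _ => ?_
          have h3 : ∀ u : Finset (Fin N),
              (r i * c u i) * (p u * ∑ e : Fin N → Bool, H u e * sg (e i))
              = r i * ((π i)⁻¹ * (p u * ∑ e : Fin N → Bool, H u e * sg (e i))
                  - p u * ∑ e : Fin N → Bool, H u e * sg (e i)) := by
            intro u
            simp only [hcdef]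
            by_cases h : i ∈ u
            · rw [if_pos h]; ring
            · rw [if_neg h, hA0 u i h]; ring
          simp_rw [h3]
          rw [← Finset.mul_sum, Finset.sum_sub_distrib, ← Finset.mul_sum, hAsum i]
          simp
  -- second moment of U
  have hc2 : ∀ i : Fin N, ∑ u : Finset (Fin N), p u * (r i * c u i)^2
      = r i ^ 2 * ((1 - π i)/π i) := by
    intro i
    have h1 : ∀ u : Finset (Fin N), p u * (r i * c u i)^2
        = p u * (if i ∈ u then r i ^ 2 * ((π i)⁻¹ - 1)^2 else r i ^ 2) := by
      intro u; simp only [hcdef]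
      by_cases h : i ∈ u
      · rw [if_pos h, if_pos h]; ring
      · rw [if_neg h, if_neg h]; ring
    simp_rw [h1]
    rw [bern i]
    have hπ0 : π i ≠ 0 := (hπpos i).ne'
    field_simp
    ring
  have hU2 : ∑ e : Fin N → Bool, ∑ u : Finset (Fin N), p u * (U u e)^2
      = 2 ^ N * ∑ i, r i ^ 2 * ((1 - π i)/π i) := by
    rw [Finset.sum_comm]
    have h1 : ∀ u : Finset (Fin N), ∑ e : Fin N → Bool, p u * (U u e)^2
        = 2 ^ N * ∑ i : Fin N, p u * (r i * c u i)^2 := by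
      intro u
      rw [← Finset.mul_sum]
      have h2 : ∑ e : Fin N → Bool, (U u e)^2 = 2 ^ N * ∑ i, (r i * c u i)^2 := by
        rw [← sum_sq_sgn (fun i => r i * c u i)]
        exact Finset.sum_congr rfl fun e _ => by rw [hUc u e]
      rw [h2, Finset.mul_sum, Finset.mul_sum, Finset.mul_sum]
      exact Finset.sum_congr rfl fun i _ => by ring
    simp_rw [h1]
    rw [← Finset.mul_sum, Finset.sum_comm]
    congr 1
    exact Finset.sum_congr rfl fun i _ => hc2 i
  -- main decomposition
  have hbayes' : ∑ e : Fin N → Bool, ∑ u : Finset (Fin N),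
      p u * (δ u (fun i => m i + r i * sg (e i)) - ∑ i, (m i + r i * sg (e i))) ^ 2
      = (∑ e : Fin N → Bool, ∑ u : Finset (Fin N), p u * (H u e)^2)
        + 2 ^ N * ∑ i, r i ^ 2 * ((1 - π i)/π i) := by
    have h1 : ∀ (e : Fin N → Bool) (u : Finset (Fin N)),
        p u * (δ u (fun i => m i + r i * sg (e i)) - ∑ i, (m i + r i * sg (e i))) ^ 2
        = p u * (H u e)^2 + 2 * (p u * (H u e * U u e)) + p u * (U u e)^2 := by
      intro e u
      have hd : δ u (fun i => m i + r i * sg (e i)) - ∑ i, (m i + r i * sg (e i))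
          = H u e + U u e := by
        rw [Finset.sum_add_distrib]
        simp only [hHdef, hUdef]
        ring
      rw [hd]; ring
    simp_rw [h1, Finset.sum_add_distrib, ← Finset.mul_sum]
    rw [hcross, hU2]
    ring
  -- conclude the H-part vanishes
  have hT : ∑ e : Fin N → Bool, ∑ u : Finset (Fin N), p u * (H u e)^2 = 0 := by
    rw [hbayes'] at hbayes
    have h2N : (2:ℝ)^N ≠ 0 := by positivity
    field_simp at hbayes
    linarith
  have hterm : p s * (H s ε)^2 = 0 := by
    have hnn1 : ∀ e ∈ (Finset.univ : Finset (Fin N → Bool)),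
        0 ≤ ∑ u : Finset (Fin N), p u * (H u e)^2 :=
      fun e _ => Finset.sum_nonneg fun u _ => mul_nonneg (hp0 u) (sq_nonneg _)
    have h2 := (Finset.sum_eq_zero_iff_of_nonneg hnn1).mp hT ε (Finset.mem_univ ε)
    have hnn2 : ∀ u ∈ (Finset.univ : Finset (Finset (Fin N))),
        0 ≤ p u * (H u ε)^2 :=
      fun u _ => mul_nonneg (hp0 u) (sq_nonneg _)
    exact (Finset.sum_eq_zero_iff_of_nonneg hnn2).mp h2 s (Finset.mem_univ s)
  have hH0 : H s ε = 0 := by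
    rcases mul_eq_zero.mp hterm with h | h
    · exact absurd h hs.ne'
    · exact pow_eq_zero_iff (two_ne_zero) |>.mp h
  have hfin : δ s (fun i => m i + r i * sg (ε i))
      - ((∑ i, m i) + ∑ i ∈ s, r i * sg (ε i) / π i) = 0 := by
    simpa only [hHdef] using hH0
  linarith
end

section
/- Let p be a sampling design with π_i > 0 for all i, let r_i > 0, and set D_π = Σ_{i=1}^N r_i²(1−π_i)/π_i. For any unbiased estimator δ, the Bayes risk under the uniform prior on the vertices of Θ satisfies 2^{−N} Σ_{ε∈{−1,1}^N} R(δ,p; m + rε) ≥ D_π. -/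
open Finset

namespace VBRLB

noncomputable def sgn (b : Bool) : ℝ := if b then 1 else -1

lemma sgn_sq (b : Bool) : sgn b ^ 2 = 1 := by cases b <;> simp [sgn]

lemma sgn_not (b : Bool) : sgn (!b) = - sgn b := by cases b <;> simp [sgn]

/-- flip coordinate i -/
def flip {N : ℕ} (i : Fin N) : (Fin N → Bool) ≃ (Fin N → Bool) where
  toFun ε := Function.update ε i (!ε i)
  invFun ε := Function.update ε i (!ε i)
  left_inv ε := by
    funext j
    rcases eq_or_ne j i with h | h
    · subst h; simp
    · simp [Function.update_of_ne h]
  right_inv ε := by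
    funext j
    rcases eq_or_ne j i with h | h
    · subst h; simp
    · simp [Function.update_of_ne h]

lemma sum_mul_sgn_eq_zero {N : ℕ} (i : Fin N) (g : (Fin N → Bool) → ℝ)
    (hg : ∀ ε, g (Function.update ε i (!ε i)) = g ε) :
    ∑ ε : Fin N → Bool, g ε * sgn (ε i) = 0 := by
  have h := Equiv.sum_comp (flip i) (fun ε => g ε * sgn (ε i))
  have h2 : ∀ ε : Fin N → Bool,
      (fun ε => g ε * sgn (ε i)) (flip i ε) = - (g ε * sgn (ε i)) := by
    intro ε
    simp only [flip, Equiv.coe_fn_mk]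
    rw [hg, Function.update_self, sgn_not]
    ring
  rw [Finset.sum_congr rfl (fun ε _ => h2 ε), Finset.sum_neg_distrib] at h
  linarith

lemma sum_sgn_mul_sgn {N : ℕ} (i j : Fin N) :
    ∑ ε : Fin N → Bool, sgn (ε i) * sgn (ε j)
      = if i = j then (2 : ℝ) ^ N else 0 := by
  rcases eq_or_ne i j with h | h
  · subst h
    simp only [if_pos rfl, ← sq]
    rw [Finset.sum_congr rfl (fun ε _ => sgn_sq (ε i))]
    simp [Finset.card_univ]
  · rw [if_neg h]
    have := sum_mul_sgn_eq_zero i (fun ε => sgn (ε j)) (fun ε => by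
      show sgn (Function.update ε i (!ε i) j) = sgn (ε j)
      rw [Function.update_of_ne (Ne.symm h)])
    simpa [mul_comm] using this

lemma sum_sgn {N : ℕ} (i : Fin N) : ∑ ε : Fin N → Bool, sgn (ε i) = 0 := by
  have := sum_mul_sgn_eq_zero i (fun _ => (1:ℝ)) (fun ε => rfl)
  simpa using this

/-- Bessel's inequality on the cube for the degree-one characters. -/
lemma bessel {N : ℕ} (g : (Fin N → Bool) → ℝ) :
    ∑ i : Fin N, (∑ ε : Fin N → Bool, g ε * sgn (ε i)) ^ 2
      ≤ 2 ^ N * ∑ ε : Fin N → Bool, g ε ^ 2 := by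
  set c : Fin N → ℝ := fun i => ∑ ε : Fin N → Bool, g ε * sgn (ε i) with hc
  have hP : (0:ℝ) < 2 ^ N := by positivity
  have h1 : ∑ ε : Fin N → Bool, g ε * (∑ i, c i * sgn (ε i)) = ∑ i, (c i) ^ 2 := by
    have : ∀ ε : Fin N → Bool, g ε * (∑ i, c i * sgn (ε i))
        = ∑ i, c i * (g ε * sgn (ε i)) := by
      intro ε; rw [Finset.mul_sum]; exact Finset.sum_congr rfl fun i _ => by ring
    rw [Finset.sum_congr rfl fun ε _ => this ε, Finset.sum_comm]
    refine Finset.sum_congr rfl fun i _ => ?_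
    rw [← Finset.mul_sum, sq, hc]
  have h2 : ∑ ε : Fin N → Bool, (∑ i, c i * sgn (ε i)) ^ 2 = 2 ^ N * ∑ i, (c i) ^ 2 := by
    have expand : ∀ ε : Fin N → Bool, (∑ i, c i * sgn (ε i)) ^ 2
        = ∑ i, ∑ j, (c i * c j) * (sgn (ε i) * sgn (ε j)) := by
      intro ε
      rw [sq, Finset.sum_mul_sum]
      exact Finset.sum_congr rfl fun i _ => Finset.sum_congr rfl fun j _ => by ring
    rw [Finset.sum_congr rfl fun ε _ => expand ε]
    rw [Finset.sum_comm]
    have : ∀ i : Fin N, ∑ ε : Fin N → Bool, ∑ j, (c i * c j) * (sgn (ε i) * sgn (ε j))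
        = 2 ^ N * (c i) ^ 2 := by
      intro i
      rw [Finset.sum_comm]
      have : ∀ j : Fin N, ∑ ε : Fin N → Bool, (c i * c j) * (sgn (ε i) * sgn (ε j))
          = if i = j then (c i)^2 * 2 ^ N else 0 := by
        intro j
        rw [← Finset.mul_sum, sum_sgn_mul_sgn]
        rcases eq_or_ne i j with h | h
        · subst h; simp only [if_pos]; ring
        · simp [h]
      rw [Finset.sum_congr rfl fun j _ => this j, Finset.sum_ite_eq]
      simp [mul_comm]
    rw [Finset.sum_congr rfl fun i _ => this i, ← Finset.mul_sum]
  have key : 0 ≤ ∑ ε : Fin N → Bool, ((2:ℝ) ^ N * g ε - ∑ i, c i * sgn (ε i)) ^ 2 :=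
    Finset.sum_nonneg fun ε _ => sq_nonneg _
  have expand2 : ∑ ε : Fin N → Bool, ((2:ℝ) ^ N * g ε - ∑ i, c i * sgn (ε i)) ^ 2
      = ((2:ℝ)^N)^2 * (∑ ε : Fin N → Bool, g ε ^ 2)
        - 2 * 2 ^ N * (∑ ε : Fin N → Bool, g ε * (∑ i, c i * sgn (ε i)))
        + ∑ ε : Fin N → Bool, (∑ i, c i * sgn (ε i)) ^ 2 := by
    have e3 : ∀ ε : Fin N → Bool, ((2:ℝ) ^ N * g ε - ∑ i, c i * sgn (ε i)) ^ 2
        = ((2:ℝ)^N)^2 * g ε ^ 2 - 2 * 2 ^ N * (g ε * (∑ i, c i * sgn (ε i)))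
          + (∑ i, c i * sgn (ε i)) ^ 2 := fun ε => by ring
    rw [Finset.sum_congr rfl fun ε _ => e3 ε, Finset.sum_add_distrib,
      Finset.sum_sub_distrib, ← Finset.mul_sum, ← Finset.mul_sum]
  rw [expand2, h1, h2] at key
  nlinarith [hP, Finset.sum_nonneg (fun i (_ : i ∈ (univ : Finset (Fin N))) => sq_nonneg (c i))]



lemma weighted_cs {ι : Type*} (A : Finset ι) (p x : ι → ℝ) (hp0 : ∀ s, 0 ≤ p s) :
    (∑ s ∈ A, p s * x s) ^ 2 ≤ (∑ s ∈ A, p s) * ∑ s ∈ A, p s * x s ^ 2 := by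
  have h := Finset.sum_mul_sq_le_sq_mul_sq A (fun s => Real.sqrt (p s))
      (fun s => Real.sqrt (p s) * x s)
  have e1 : ∀ s ∈ A, Real.sqrt (p s) * (Real.sqrt (p s) * x s) = p s * x s := by
    intro s _
    rw [← mul_assoc, Real.mul_self_sqrt (hp0 s)]
  have e2 : ∀ s ∈ A, Real.sqrt (p s) ^ 2 = p s := fun s _ => Real.sq_sqrt (hp0 s)
  have e3 : ∀ s ∈ A, (Real.sqrt (p s) * x s) ^ 2 = p s * x s ^ 2 := by
    intro s _
    rw [mul_pow, Real.sq_sqrt (hp0 s)]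
  rw [Finset.sum_congr rfl e1, Finset.sum_congr rfl e2, Finset.sum_congr rfl e3] at h
  exact h

lemma core {N : ℕ} (r : Fin N → ℝ) (p : Finset (Fin N) → ℝ) (hp0 : ∀ s, 0 ≤ p s)
    (hp1 : ∑ s : Finset (Fin N), p s = 1)
    (π : Fin N → ℝ) (hπ : ∀ i, π i = ∑ s : Finset (Fin N), if i ∈ s then p s else 0)
    (hπpos : ∀ i, 0 < π i)
    (e : Finset (Fin N) → (Fin N → Bool) → ℝ)
    (hzero : ∀ ε, ∑ s : Finset (Fin N), p s * e s ε = 0)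
    (hfour : ∀ s (i : Fin N), i ∉ s →
      (∑ ε : Fin N → Bool, e s ε * sgn (ε i)) = -((2:ℝ) ^ N * r i)) :
    ∑ i, r i ^ 2 * ((1 - π i) / π i)
      ≤ ((2:ℝ) ^ N)⁻¹ * ∑ ε : Fin N → Bool, ∑ s : Finset (Fin N), p s * e s ε ^ 2 := by
  have hP : (0:ℝ) < 2 ^ N := by positivity
  set d : Finset (Fin N) → Fin N → ℝ :=
    fun s i => ((2:ℝ) ^ N)⁻¹ * ∑ ε : Fin N → Bool, e s ε * sgn (ε i) with hd
  -- Bessel per s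
  have hb : ∀ s, ∑ i, (d s i) ^ 2 ≤ ((2:ℝ) ^ N)⁻¹ * ∑ ε : Fin N → Bool, (e s ε) ^ 2 := by
    intro s
    have h := bessel (e s)
    have : ∑ i, (d s i) ^ 2
        = (((2:ℝ) ^ N)⁻¹)^2 * ∑ i, (∑ ε : Fin N → Bool, e s ε * sgn (ε i)) ^ 2 := by
      rw [Finset.mul_sum]
      exact Finset.sum_congr rfl fun i _ => by rw [hd]; ring
    rw [this]
    calc (((2:ℝ) ^ N)⁻¹)^2 * ∑ i, (∑ ε : Fin N → Bool, e s ε * sgn (ε i)) ^ 2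
        ≤ (((2:ℝ) ^ N)⁻¹)^2 * (2 ^ N * ∑ ε : Fin N → Bool, (e s ε) ^ 2) := by
          apply mul_le_mul_of_nonneg_left h (by positivity)
      _ = ((2:ℝ) ^ N)⁻¹ * ∑ ε : Fin N → Bool, (e s ε) ^ 2 := by
          field_simp
  -- unbiasedness in Fourier form
  have hzero' : ∀ i : Fin N, ∑ s : Finset (Fin N), p s * d s i = 0 := by
    intro i
    have : ∀ s : Finset (Fin N), p s * d s i
        = ∑ ε : Fin N → Bool, ((2:ℝ) ^ N)⁻¹ * sgn (ε i) * (p s * e s ε) := by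
      intro s
      rw [hd]
      dsimp only
      rw [Finset.mul_sum, Finset.mul_sum]
      exact Finset.sum_congr rfl fun ε _ => by ring
    rw [Finset.sum_congr rfl fun s _ => this s, Finset.sum_comm]
    refine Finset.sum_eq_zero fun ε _ => ?_
    rw [← Finset.mul_sum, hzero ε, mul_zero]
  -- per-coordinate bound
  have hcoord : ∀ i : Fin N, r i ^ 2 * ((1 - π i) / π i)
      ≤ ∑ s : Finset (Fin N), p s * (d s i) ^ 2 := by
    intro i
    have hπi := hπpos i
    set A := Finset.univ.filter (fun s : Finset (Fin N) => i ∈ s) with hA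
    set B := Finset.univ.filter (fun s : Finset (Fin N) => ¬ i ∈ s) with hB
    have hπA : ∑ s ∈ A, p s = π i := by
      rw [hπ i, hA, Finset.sum_filter]
    have hsplitp : ∑ s ∈ A, p s + ∑ s ∈ B, p s = 1 := by
      rw [hA, hB, Finset.sum_filter_add_sum_filter_not, hp1]
    have hpB : ∑ s ∈ B, p s = 1 - π i := by linarith [hπA, hsplitp]
    have hdB : ∀ s ∈ B, d s i = -(r i) := by
      intro s hs
      rw [hB, Finset.mem_filter] at hs
      rw [hd]
      dsimp only
      rw [hfour s i hs.2]
      field_simp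
    have hB1 : ∑ s ∈ B, p s * d s i = -((1 - π i) * r i) := by
      rw [Finset.sum_congr rfl fun s hs => by rw [hdB s hs]]
      rw [← Finset.sum_mul, hpB]; ring
    have hB2 : ∑ s ∈ B, p s * (d s i) ^ 2 = (1 - π i) * r i ^ 2 := by
      rw [Finset.sum_congr rfl (fun s hs => by rw [hdB s hs]; ring : ∀ s ∈ B,
        p s * (d s i)^2 = p s * r i ^ 2)]
      rw [← Finset.sum_mul, hpB]
    have hsplit1 : ∑ s ∈ A, p s * d s i + ∑ s ∈ B, p s * d s i = 0 := by
      rw [hA, hB, Finset.sum_filter_add_sum_filter_not, hzero' i]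
    have hA1 : ∑ s ∈ A, p s * d s i = (1 - π i) * r i := by
      rw [hB1] at hsplit1; linarith
    have hcs := weighted_cs A p (fun s => d s i) hp0
    rw [hA1, hπA] at hcs
    have hA2 : ((1 - π i) * r i) ^ 2 / π i ≤ ∑ s ∈ A, p s * (d s i) ^ 2 := by
      rw [div_le_iff₀ hπi]
      calc ((1 - π i) * r i) ^ 2 ≤ π i * ∑ s ∈ A, p s * (d s i) ^ 2 := hcs
        _ = (∑ s ∈ A, p s * (d s i) ^ 2) * π i := by ring
    have hsplit2 : ∑ s : Finset (Fin N), p s * (d s i) ^ 2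
        = ∑ s ∈ A, p s * (d s i) ^ 2 + ∑ s ∈ B, p s * (d s i) ^ 2 := by
      rw [hA, hB, Finset.sum_filter_add_sum_filter_not]
    have hid : r i ^ 2 * ((1 - π i) / π i)
        = ((1 - π i) * r i) ^ 2 / π i + (1 - π i) * r i ^ 2 := by
      field_simp
      ring
    rw [hsplit2, hid, hB2]
    linarith
  -- assemble
  calc ∑ i, r i ^ 2 * ((1 - π i) / π i)
      ≤ ∑ i, ∑ s : Finset (Fin N), p s * (d s i) ^ 2 :=
        Finset.sum_le_sum fun i _ => hcoord i
    _ = ∑ s : Finset (Fin N), p s * ∑ i, (d s i) ^ 2 := by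
        rw [Finset.sum_comm]
        exact Finset.sum_congr rfl fun s _ => by rw [Finset.mul_sum]
    _ ≤ ∑ s : Finset (Fin N), p s * (((2:ℝ) ^ N)⁻¹ * ∑ ε : Fin N → Bool, (e s ε) ^ 2) :=
        Finset.sum_le_sum fun s _ => mul_le_mul_of_nonneg_left (hb s) (hp0 s)
    _ = ((2:ℝ) ^ N)⁻¹ * ∑ ε : Fin N → Bool, ∑ s : Finset (Fin N), p s * e s ε ^ 2 := by
        have hth : ∀ s : Finset (Fin N), p s * (((2:ℝ)^N)⁻¹ * ∑ ε : Fin N → Bool, (e s ε) ^2)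
            = ∑ ε : Fin N → Bool, ((2:ℝ)^N)⁻¹ * (p s * e s ε ^2) := by
          intro s
          rw [Finset.mul_sum, Finset.mul_sum]
          exact Finset.sum_congr rfl fun ε _ => by ring
        rw [Finset.sum_congr rfl fun s _ => hth s, Finset.sum_comm, Finset.mul_sum]
        exact Finset.sum_congr rfl fun ε _ => (Finset.mul_sum _ _ _).symm

end VBRLB


open VBRLB in
/-- Vertex Bayes-risk lower bound. For any unbiased
estimator `δ`, the Bayes risk under the uniform prior on the `2^N` vertices
`m + rε` of `Θ` (sign vectors `ε` encoded by `Fin N → Bool`, `true ↦ 1`,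
`false ↦ -1`) is at least `Dπ = ∑ i, r i ^ 2 * (1 − π i)/π i`. -/
theorem vertex_bayes_risk_lower_bound
    (N : ℕ) (a b : Fin N → ℝ) (hab : ∀ i, a i < b i)
    (m r : Fin N → ℝ)
    (hm : ∀ i, m i = (a i + b i) / 2)
    (hr : ∀ i, r i = (b i - a i) / 2) (hrpos : ∀ i, 0 < r i)
    (p : Finset (Fin N) → ℝ) (hp0 : ∀ s, 0 ≤ p s)
    (hp1 : ∑ s : Finset (Fin N), p s = 1)
    (π : Fin N → ℝ)
    (hπ : ∀ i, π i = ∑ s : Finset (Fin N), if i ∈ s then p s else 0)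
    (hπpos : ∀ i, 0 < π i)
    (δ : Finset (Fin N) → (Fin N → ℝ) → ℝ)
    (hloc : ∀ s (y y' : Fin N → ℝ), (∀ i ∈ s, y i = y' i) → δ s y = δ s y')
    (hunb : ∀ y : Fin N → ℝ, (∀ i, y i ∈ Set.Icc (a i) (b i)) →
      ∑ s : Finset (Fin N), p s * δ s y = ∑ i, y i) :
    ((2 : ℝ) ^ N)⁻¹ *
        ∑ ε : Fin N → Bool, ∑ s : Finset (Fin N),
          p s * (δ s (fun i => m i + r i * (if ε i then 1 else -1))
            - ∑ i, (m i + r i * (if ε i then 1 else -1))) ^ 2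
      ≥ ∑ i, r i ^ 2 * ((1 - π i) / π i) := by
  have hy : ∀ (ε : Fin N → Bool) (i : Fin N),
      m i + r i * (if ε i then (1:ℝ) else -1) = m i + r i * sgn (ε i) :=
    fun ε i => rfl
  set Y : (Fin N → Bool) → (Fin N → ℝ) := fun ε i => m i + r i * sgn (ε i) with hY
  set T : (Fin N → Bool) → ℝ := fun ε => ∑ i, Y ε i with hT
  have hzero : ∀ ε : Fin N → Bool,
      ∑ s : Finset (Fin N), p s * (δ s (Y ε) - T ε) = 0 := by
    intro ε
    have hIcc : ∀ i, Y ε i ∈ Set.Icc (a i) (b i) := by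
      intro i
      have hab' := (hab i).le
      cases h : ε i <;>
        · simp only [hY, sgn, h]
          constructor <;> [skip; skip] <;> rw [hm i, hr i] <;> norm_num <;> linarith
    have h1 := hunb (Y ε) hIcc
    have h2 : ∀ s : Finset (Fin N), p s * (δ s (Y ε) - T ε)
        = p s * δ s (Y ε) - p s * T ε := fun s => by ring
    rw [Finset.sum_congr rfl fun s _ => h2 s, Finset.sum_sub_distrib,
      ← Finset.sum_mul, h1, hp1, hT]
    simp
  have hfour : ∀ (s : Finset (Fin N)) (i : Fin N), i ∉ s →
      (∑ ε : Fin N → Bool, (δ s (Y ε) - T ε) * sgn (ε i)) = -((2:ℝ) ^ N * r i) := by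
    intro s i his
    have hδ : ∑ ε : Fin N → Bool, δ s (Y ε) * sgn (ε i) = 0 := by
      refine sum_mul_sgn_eq_zero i (fun ε => δ s (Y ε)) fun ε => ?_
      refine hloc s _ _ fun j hj => ?_
      have hji : j ≠ i := fun h => his (h ▸ hj)
      simp only [hY]
      rw [Function.update_of_ne hji]
    have hTsum : ∑ ε : Fin N → Bool, T ε * sgn (ε i) = 2 ^ N * r i := by
      have e1 : ∀ ε : Fin N → Bool, T ε * sgn (ε i)
          = ∑ j, (m j * sgn (ε i) + r j * (sgn (ε j) * sgn (ε i))) := by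
        intro ε
        rw [hT]
        dsimp only
        rw [Finset.sum_mul]
        exact Finset.sum_congr rfl fun j _ => by simp only [hY]; ring
      rw [Finset.sum_congr rfl fun ε _ => e1 ε, Finset.sum_comm]
      have e2 : ∀ j : Fin N, ∑ ε : Fin N → Bool,
          (m j * sgn (ε i) + r j * (sgn (ε j) * sgn (ε i)))
          = r j * (if j = i then (2:ℝ)^N else 0) := by
        intro j
        rw [Finset.sum_add_distrib, ← Finset.mul_sum, ← Finset.mul_sum,
          sum_sgn i, sum_sgn_mul_sgn j i]
        simp
      rw [Finset.sum_congr rfl fun j _ => e2 j]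
      simp [mul_ite]
      ring
    have e3 : ∀ ε : Fin N → Bool, (δ s (Y ε) - T ε) * sgn (ε i)
        = δ s (Y ε) * sgn (ε i) - T ε * sgn (ε i) := fun ε => by ring
    rw [Finset.sum_congr rfl fun ε _ => e3 ε, Finset.sum_sub_distrib, hδ, hTsum]
    ring
  have key := VBRLB.core r p hp0 hp1 π hπ hπpos
    (fun s ε => δ s (Y ε) - T ε) hzero hfour
  exact key
end
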